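/- Let m ≥ 2 be an integer and let s_2, …, s_m ∈ (0, ∞). If there exists a constant C > 0 such that sup_{1 ≤ j_1 ≤ n} ( Σ_{j_2=1}^n ( ⋯ ( Σ_{j_m=1}^n |T(e_{j_1}, …, e_{j_m})|^{s_m} )^{s_{m−1}/s_m} ⋯ )^{s_2/s_3} )^{1/s_2} ≤ C ‖T‖ for all positive integers n and all m-linear forms T : ℓ_m^n × ⋯ × ℓ_m^n → 𝕂, then s_k ≥ m/(k−1) for every k = 2, …, m. -/

import Mathlib

open scoped ENNReal

/-- The iterated mixed-norm expression
`( Σ_{j_1} ( ⋯ ( Σ_{j_m} f(j_1,…,j_m)^{s_m} )^{s_{m−1}/s_m} ⋯ )^{s_1/s_2} )^{1/s_1}`,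
defined recursively: for exponents `s : Fin m → ℝ` and `f : (Fin m → Fin n) → ℝ`. -/
noncomputable def mixedNorm (n : ℕ) : (m : ℕ) → (Fin m → ℝ) → ((Fin m → Fin n) → ℝ) → ℝ
  | 0, _, f => f Fin.elim0
  | (m + 1), s, f =>
      (∑ j : Fin n,
        (mixedNorm n m (fun i => s i.succ) (fun js => f (Fin.cons j js))) ^ (s 0)) ^ (1 / s 0)

lemma mixedNorm_succ (n M : ℕ) (s : Fin (M+1) → ℝ) (f : (Fin (M+1) → Fin n) → ℝ) :
    mixedNorm n (M+1) s f =
      (∑ j : Fin n,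
        (mixedNorm n M (fun i => s i.succ) (fun js => f (Fin.cons j js))) ^ (s 0)) ^ (1 / s 0) := rfl

lemma mixedNorm_zero_fun (n : ℕ) : ∀ (M : ℕ) (s : Fin M → ℝ), (∀ i, 0 < s i) →
    mixedNorm n M s (fun _ => 0) = 0
  | 0, _, _ => rfl
  | (M+1), s, hs => by
      rw [mixedNorm_succ, mixedNorm_zero_fun n M _ (fun i => hs i.succ),
        Real.zero_rpow (hs 0).ne', Finset.sum_const, smul_zero,
        Real.zero_rpow (one_div_ne_zero (hs 0).ne')]

/-- mixedNorm of the indicator of the constant tuple `j` equals 1. -/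
lemma mixedNorm_diag (n : ℕ) : ∀ (M : ℕ) (s : Fin M → ℝ), (∀ i, 0 < s i) → ∀ j : Fin n,
    mixedNorm n M s (fun js => if ∀ t, js t = j then 1 else 0) = 1
  | 0, _, _, j => by
      show (if ∀ t : Fin 0, Fin.elim0 t = j then (1:ℝ) else 0) = 1
      simp
  | (M+1), s, hs, j => by
      rw [mixedNorm_succ]
      have h1 : ∀ j' : Fin n,
          (fun js => if ∀ t, (Fin.cons j' js : Fin (M+1) → Fin n) t = j then (1:ℝ) else 0)
            = (fun js : Fin M → Fin n =>
                if j' = j then (if ∀ t, js t = j then (1:ℝ) else 0) else 0) := by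
        intro j'
        funext js
        by_cases hj : j' = j
        · subst hj
          simp [Fin.forall_fin_succ]
        · simp [Fin.forall_fin_succ, hj]
      have h2 : ∀ j' : Fin n,
          mixedNorm n M (fun i => s i.succ) (fun js => if ∀ t, (Fin.cons j' js : Fin (M+1) → Fin n) t = j then (1:ℝ) else 0)
            = if j' = j then 1 else 0 := by
        intro j'
        rw [h1 j']
        by_cases hj : j' = j
        · simp only [hj, if_true]
          exact mixedNorm_diag n M _ (fun i => hs i.succ) j
        · simp only [hj, if_false]
          exact mixedNorm_zero_fun n M _ (fun i => hs i.succ)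
      simp only [h2]
      have : ∀ j' : Fin n, ((if j' = j then (1:ℝ) else 0) ^ (s 0)) = if j' = j then 1 else 0 := by
        intro j'
        by_cases hj : j' = j <;>
          simp [hj, Real.one_rpow, Real.zero_rpow (hs 0).ne']
      simp only [this, Finset.sum_ite_eq', Finset.mem_univ, if_true, Real.one_rpow]

example : True := trivial

/-- Main computation: mixedNorm of the indicator pattern equals n^(1/s K). -/
lemma mixedNorm_ind (n : ℕ) (j0 : Fin n) : ∀ (M : ℕ) (s : Fin M → ℝ), (∀ i, 0 < s i) → ∀ K : Fin M,
    mixedNorm n M s (fun js =>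
        if (∀ t, t < K → js t = j0) ∧ (∀ t, K ≤ t → js t = js K) then 1 else 0)
      = (n:ℝ) ^ (1 / s K)
  | 0, _, _, K => K.elim0
  | (M+1), s, hs, K => by
      rcases Fin.eq_zero_or_eq_succ K with hK | ⟨K', hK⟩
      · subst hK
        rw [mixedNorm_succ]
        have h1 : ∀ j : Fin n,
            (fun js : Fin M → Fin n =>
              if (∀ t, t < (0 : Fin (M+1)) → (Fin.cons j js : Fin (M+1) → Fin n) t = j0)
                  ∧ (∀ t, (0 : Fin (M+1)) ≤ t →
                      (Fin.cons j js : Fin (M+1) → Fin n) t = (Fin.cons j js : Fin (M+1) → Fin n) 0)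
                then (1:ℝ) else 0)
            = (fun js : Fin M → Fin n => if ∀ t, js t = j then (1:ℝ) else 0) := by
          intro j
          funext js
          congr 1
          simp only [eq_iff_iff]
          constructor
          · rintro ⟨-, h2⟩ t
            have := h2 t.succ (Fin.zero_le _)
            simpa using this
          · intro h
            refine ⟨fun t ht => absurd ht (by simp [Fin.lt_iff_val_lt_val]), fun t _ => ?_⟩
            rcases Fin.eq_zero_or_eq_succ t with rfl | ⟨t', rfl⟩
            · simp
            · simpa using h t'
        simp only [h1]
        have h2 : ∀ j : Fin n,
            mixedNorm n M (fun i => s i.succ) (fun js : Fin M → Fin n => if ∀ t, js t = j then (1:ℝ) else 0) = 1 :=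
          fun j => mixedNorm_diag n M _ (fun i => hs i.succ) j
        simp only [h2, Real.one_rpow, Finset.sum_const, Finset.card_univ, Fintype.card_fin,
          nsmul_eq_mul, mul_one]
      · subst hK
        rw [mixedNorm_succ]
        have h1 : ∀ j : Fin n,
            (fun js : Fin M → Fin n =>
              if (∀ t, t < K'.succ → (Fin.cons j js : Fin (M+1) → Fin n) t = j0)
                  ∧ (∀ t, K'.succ ≤ t →
                      (Fin.cons j js : Fin (M+1) → Fin n) t = (Fin.cons j js : Fin (M+1) → Fin n) K'.succ)
                then (1:ℝ) else 0)
            = (fun js : Fin M → Fin n =>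
                if j = j0 then
                  (if (∀ t, t < K' → js t = j0) ∧ (∀ t, K' ≤ t → js t = js K') then (1:ℝ) else 0)
                else 0) := by
          intro j
          funext js
          by_cases hj : j = j0
          · subst hj
            simp only [if_true, eq_self_iff_true]
            congr 1
            simp only [eq_iff_iff]
            constructor
            · rintro ⟨ha, hb⟩
              constructor
              · intro t ht
                have := ha t.succ (by simpa [Fin.succ_lt_succ_iff] using ht)
                simpa using this
              · intro t ht
                have := hb t.succ (by simpa [Fin.succ_le_succ_iff] using ht)
                simpa using this
            · rintro ⟨ha, hb⟩
              constructor
              · intro t ht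
                rcases Fin.eq_zero_or_eq_succ t with rfl | ⟨t', rfl⟩
                · simp
                · have ht' : t' < K' := by simpa [Fin.succ_lt_succ_iff] using ht
                  simpa using ha t' ht'
              · intro t ht
                rcases Fin.eq_zero_or_eq_succ t with rfl | ⟨t', rfl⟩
                · exact absurd ht (by simp [Fin.le_iff_val_le_val])
                · have ht' : K' ≤ t' := by simpa [Fin.succ_le_succ_iff] using ht
                  simpa using hb t' ht'
          · rw [if_neg hj, if_neg]
            rintro ⟨ha, -⟩
            exact hj (by simpa using ha 0 (by simp [Fin.lt_iff_val_lt_val]))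
        simp only [h1]
        have h2 : ∀ j : Fin n,
            mixedNorm n M (fun i => s i.succ)
              (fun js : Fin M → Fin n =>
                if j = j0 then
                  (if (∀ t, t < K' → js t = j0) ∧ (∀ t, K' ≤ t → js t = js K') then (1:ℝ) else 0)
                else 0)
            = if j = j0 then (n:ℝ) ^ (1 / s K'.succ) else 0 := by
          intro j
          by_cases hj : j = j0
          · simp only [hj, if_true, eq_self_iff_true]
            exact mixedNorm_ind n j0 M (fun i => s i.succ) (fun i => hs i.succ) K'
          · simp only [hj, if_false]
            exact mixedNorm_zero_fun n M _ (fun i => hs i.succ)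
        simp only [h2]
        have h3 : ∀ j : Fin n,
            ((if j = j0 then (n:ℝ) ^ (1 / s K'.succ) else 0) ^ (s 0))
              = if j = j0 then ((n:ℝ) ^ (1 / s K'.succ)) ^ (s 0) else 0 := by
          intro j
          by_cases hj : j = j0 <;> simp [hj, Real.zero_rpow (hs 0).ne']
        simp only [h3, Finset.sum_ite_eq', Finset.mem_univ, if_true]
        rw [← Real.rpow_mul (by positivity : (0:ℝ) ≤ (n:ℝ)),
          ← Real.rpow_mul (by positivity : (0:ℝ) ≤ (n:ℝ)), mul_assoc,
          mul_one_div, div_self (hs 0).ne', mul_one]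

section sub
variable {𝕂 : Type*} [RCLike 𝕂] {m n : ℕ}

lemma toReal_m (hm : 1 ≤ m) : (0:ℝ) < ((m : ℝ≥0∞)).toReal := by
  rw [ENNReal.toReal_natCast]
  exact_mod_cast Nat.pos_of_ne_zero (by omega)

lemma coord_le_norm (hm : 1 ≤ m) (z : PiLp (m : ℝ≥0∞) (fun _ : Fin n => 𝕂)) (j : Fin n) :
    ‖z j‖ ≤ ‖z‖ := by
  have h0 := toReal_m (m := m) hm
  rw [PiLp.norm_eq_sum h0]
  have h1 : ‖z j‖ = ((‖z j‖ ^ ((m:ℝ≥0∞)).toReal) ^ (1 / ((m:ℝ≥0∞)).toReal)) := by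
    rw [← Real.rpow_mul (norm_nonneg _), mul_one_div, div_self h0.ne', Real.rpow_one]
  rw [h1]
  apply Real.rpow_le_rpow (by positivity)
  · exact Finset.single_le_sum (f := fun i => ‖z i‖ ^ ((m:ℝ≥0∞)).toReal)
      (fun i _ => by positivity) (Finset.mem_univ j)
  · positivity

lemma sum_pow_eq_one (hm : 1 ≤ m) (z : PiLp (m : ℝ≥0∞) (fun _ : Fin n => 𝕂)) (hz : ‖z‖ = 1) :
    ∑ i : Fin n, ‖z i‖ ^ ((m:ℝ)) = 1 := by
  have h0 := toReal_m (m := m) hm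
  have h1 : ((m : ℝ≥0∞)).toReal = (m:ℝ) := ENNReal.toReal_natCast m
  have h2 := (PiLp.norm_eq_sum h0 z).symm.trans hz
  rw [h1] at h2 h0
  have h3 : (0:ℝ) ≤ ∑ i : Fin n, ‖z i‖ ^ (m:ℝ) :=
    Finset.sum_nonneg fun i _ => by positivity
  have h4 := congrArg (fun t : ℝ => t ^ ((m:ℝ))) h2
  rwa [← Real.rpow_mul h3, one_div, inv_mul_cancel₀ h0.ne', Real.rpow_one, Real.one_rpow] at h4

/-- power sum comparison: if `∑ a_i^m = 1` then `∑ a_i^r ≤ n^(1 - r/m)`. -/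
lemma sum_rpow_le (hn : 0 < n) {a : Fin n → ℝ} (ha : ∀ i, 0 ≤ a i) {r : ℕ}
    (hr : 1 ≤ r) (hrm : r ≤ m) (hsum : ∑ i : Fin n, a i ^ (m:ℝ) = 1) :
    ∑ i : Fin n, a i ^ (r:ℝ) ≤ (n:ℝ) ^ (1 - (r:ℝ)/(m:ℝ)) := by
  have hm0 : (0:ℝ) < (m:ℝ) := by exact_mod_cast Nat.pos_of_ne_zero (by omega)
  have hr0 : (0:ℝ) < (r:ℝ) := by exact_mod_cast hr
  have hn0 : (0:ℝ) < (n:ℝ) := by exact_mod_cast hn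
  set p : ℝ := (m:ℝ)/(r:ℝ) with hp
  have hp0 : 0 < p := div_pos hm0 hr0
  have hp1 : 1 ≤ p := (one_le_div hr0).2 (by exact_mod_cast hrm)
  have hw' : ∑ _i : Fin n, 1/(n:ℝ) = 1 := by
    rw [Finset.sum_const, Finset.card_univ, Fintype.card_fin, nsmul_eq_mul, mul_one_div,
      div_self hn0.ne']
  have key := Real.rpow_arith_mean_le_arith_mean_rpow Finset.univ
    (fun _ : Fin n => 1/(n:ℝ)) (fun i => a i ^ (r:ℝ))
    (fun i _ => by positivity) hw' (fun i _ => Real.rpow_nonneg (ha i) _) hp1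
  have hzp : ∀ i : Fin n, (a i ^ (r:ℝ)) ^ p = a i ^ (m:ℝ) := by
    intro i
    rw [← Real.rpow_mul (ha i), hp, mul_div_cancel₀]
    exact hr0.ne'
  rw [← Finset.mul_sum, ← Finset.mul_sum] at key
  simp only [hzp] at key
  rw [hsum, mul_one] at key
  set X : ℝ := ∑ i : Fin n, a i ^ (r:ℝ) with hX
  have hX0 : 0 ≤ X := Finset.sum_nonneg fun i _ => Real.rpow_nonneg (ha i) _
  have h4 : (1/(n:ℝ)) * X ≤ (1/(n:ℝ)) ^ (1/p) := by
    have h5 : ((1/(n:ℝ) * X) ^ p) ^ (1/p) ≤ ((1/(n:ℝ)) ^ (1/p)) :=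
      Real.rpow_le_rpow (by positivity) key (by positivity)
    rwa [← Real.rpow_mul (by positivity), mul_one_div, div_self hp0.ne',
      Real.rpow_one] at h5
  have h6 : X ≤ (n:ℝ) * (1/(n:ℝ)) ^ (1/p) := by
    have h7 := mul_le_mul_of_nonneg_left h4 hn0.le
    rwa [← mul_assoc, mul_one_div, div_self hn0.ne', one_mul] at h7
  calc X ≤ (n:ℝ) * (1/(n:ℝ)) ^ (1/p) := h6
  _ = (n:ℝ) ^ (1 - (r:ℝ)/(m:ℝ)) := by
      rw [one_div (n:ℝ), ← Real.rpow_neg_one (n:ℝ), ← Real.rpow_mul hn0.le]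
      nth_rewrite 1 [show (n:ℝ) = (n:ℝ) ^ (1:ℝ) from (Real.rpow_one _).symm]
      rw [← Real.rpow_add hn0]
      congr 1
      rw [hp, one_div_div]
      ring

end sub

section constr
variable (𝕂 : Type*) [RCLike 𝕂]

def tcoord {m n : ℕ} (kk : ℕ) (j0 i : Fin n) (l : Fin m) : Fin n :=
  if (l : ℕ) ≤ kk then j0 else i

noncomputable def Tml (m n kk : ℕ) (j0 : Fin n) :
    MultilinearMap 𝕂 (fun _ : Fin m => PiLp (m : ℝ≥0∞) (fun _ : Fin n => 𝕂)) 𝕂 :=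
  ∑ i : Fin n, (MultilinearMap.mkPiAlgebra 𝕂 (Fin m) 𝕂).compLinearMap
    (fun l => (LinearMap.proj (tcoord kk j0 i l)).comp
        (WithLp.linearEquiv (m : ℝ≥0∞) 𝕂 (Fin n → 𝕂)).toLinearMap)

lemma Tml_apply (m n kk : ℕ) (j0 : Fin n)
    (x : (i : Fin m) → PiLp (m : ℝ≥0∞) (fun _ : Fin n => 𝕂)) :
    Tml 𝕂 m n kk j0 x = ∑ i : Fin n, ∏ l : Fin m, (WithLp.equiv _ _) (x l) (tcoord kk j0 i l) := by
  simp [Tml, MultilinearMap.sum_apply, MultilinearMap.compLinearMap_apply,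
    MultilinearMap.mkPiAlgebra_apply]

lemma card_head (m kk : ℕ) (hkk : kk + 2 ≤ m) :
    (Finset.univ.filter (fun l : Fin m => (l:ℕ) ≤ kk)).card = kk + 1 := by
  rw [Finset.card_filter]
  rw [Fin.sum_univ_eq_sum_range (fun j => if j ≤ kk then 1 else 0) m]
  rw [← Finset.card_filter]
  have : (Finset.range m).filter (fun j => j ≤ kk) = Finset.range (kk+1) := by
    ext j
    simp only [Finset.mem_filter, Finset.mem_range]
    omega
  rw [this, Finset.card_range]

lemma card_tail (m kk : ℕ) (hkk : kk + 2 ≤ m) :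
    (Finset.univ.filter (fun l : Fin m => ¬ ((l:ℕ) ≤ kk))).card = m - (kk + 1) := by
  have h := Finset.card_filter_add_card_filter_not
    (s := (Finset.univ : Finset (Fin m))) (p := fun l : Fin m => (l:ℕ) ≤ kk)
  rw [card_head m kk hkk] at h
  simp only [Finset.card_univ, Fintype.card_fin] at h
  omega

end constr

section bound
variable {𝕂 : Type*} [RCLike 𝕂] {m n : ℕ}

lemma Tml_norm_le_unit (hm : 2 ≤ m) {kk : ℕ} (hkk : kk + 2 ≤ m) (hn : 0 < n) (j0 : Fin n)
    (y : (i : Fin m) → PiLp (m : ℝ≥0∞) (fun _ : Fin n => 𝕂)) (hy : ∀ l, ‖y l‖ = 1) :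
    ‖Tml 𝕂 m n kk j0 y‖ ≤ (n:ℝ) ^ (((kk:ℝ)+1)/(m:ℝ)) := by
  have hm1 : 1 ≤ m := by omega
  set r : ℕ := m - (kk+1) with hrdef
  have hr1 : 1 ≤ r := by omega
  have hrm : r ≤ m := by omega
  have hr0 : (0:ℝ) < (r:ℝ) := by exact_mod_cast hr1
  have hm0 : (0:ℝ) < (m:ℝ) := by exact_mod_cast hm1
  have hBe : 1 - (r:ℝ)/(m:ℝ) = ((kk:ℝ)+1)/(m:ℝ) := by
    have hc : ((r:ℕ):ℝ) = (m:ℝ) - ((kk:ℝ)+1) := by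
      rw [hrdef]
      push_cast [Nat.cast_sub (by omega : kk+1 ≤ m)]
      ring
    rw [hc]
    field_simp
    ring
  rw [← hBe, Tml_apply]
  set tailF := Finset.univ.filter (fun l : Fin m => ¬ ((l:ℕ) ≤ kk)) with htail
  have hcard : tailF.card = r := card_tail m kk hkk
  calc ‖∑ i : Fin n, ∏ l : Fin m, (WithLp.equiv _ _) (y l) (tcoord kk j0 i l)‖
      ≤ ∑ i : Fin n, ‖∏ l : Fin m, (WithLp.equiv _ _) (y l) (tcoord kk j0 i l)‖ :=
        norm_sum_le _ _
    _ = ∑ i : Fin n, ∏ l : Fin m, ‖(y l) (tcoord kk j0 i l)‖ := by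
        simp_rw [norm_prod, WithLp.equiv_apply]
    _ ≤ ∑ i : Fin n, ∏ l ∈ tailF, ‖(y l) i‖ := by
        apply Finset.sum_le_sum
        intro i _
        rw [← Finset.prod_filter_mul_prod_filter_not Finset.univ (fun l : Fin m => (l:ℕ) ≤ kk)]
        have htl : ∏ l ∈ tailF, ‖(y l) (tcoord kk j0 i l)‖ = ∏ l ∈ tailF, ‖(y l) i‖ := by
          apply Finset.prod_congr rfl
          intro l hl
          rw [htail, Finset.mem_filter] at hl
          rw [tcoord, if_neg hl.2]
        rw [← htail, htl]
        apply mul_le_of_le_one_left (Finset.prod_nonneg fun l _ => norm_nonneg _)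
        apply Finset.prod_le_one (fun l _ => norm_nonneg _)
        intro l hl
        rw [Finset.mem_filter] at hl
        rw [tcoord, if_pos hl.2]
        rw [← hy l]
        exact coord_le_norm hm1 (y l) j0
    _ ≤ ∑ i : Fin n, ∑ l ∈ tailF, (1/(r:ℝ)) * ‖(y l) i‖ ^ (r:ℝ) := by
        apply Finset.sum_le_sum
        intro i _
        have hamgm := Real.geom_mean_le_arith_mean_weighted tailF
          (fun _ => 1/(r:ℝ)) (fun l => ‖(y l) i‖ ^ (r:ℝ))
          (fun l _ => by positivity)
          (by rw [Finset.sum_const, hcard, nsmul_eq_mul, mul_one_div, div_self hr0.ne'])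
          (fun l _ => by positivity)
        calc ∏ l ∈ tailF, ‖(y l) i‖
            = ∏ l ∈ tailF, (‖(y l) i‖ ^ (r:ℝ)) ^ (1/(r:ℝ)) := by
              apply Finset.prod_congr rfl
              intro l _
              rw [← Real.rpow_mul (norm_nonneg _), mul_one_div, div_self hr0.ne',
                Real.rpow_one]
          _ ≤ ∑ l ∈ tailF, (1/(r:ℝ)) * ‖(y l) i‖ ^ (r:ℝ) := hamgm
    _ = ∑ l ∈ tailF, (1/(r:ℝ)) * ∑ i : Fin n, ‖(y l) i‖ ^ (r:ℝ) := by
        rw [Finset.sum_comm]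
        simp_rw [Finset.mul_sum]
    _ ≤ ∑ l ∈ tailF, (1/(r:ℝ)) * (n:ℝ) ^ (1 - (r:ℝ)/(m:ℝ)) := by
        apply Finset.sum_le_sum
        intro l _
        apply mul_le_mul_of_nonneg_left _ (by positivity)
        exact sum_rpow_le hn (fun i => norm_nonneg _) hr1 hrm
          (sum_pow_eq_one hm1 (y l) (hy l))
    _ = (n:ℝ) ^ (1 - (r:ℝ)/(m:ℝ)) := by
        rw [Finset.sum_const, hcard, nsmul_eq_mul]
        field_simp

lemma Tml_norm_le (hm : 2 ≤ m) {kk : ℕ} (hkk : kk + 2 ≤ m) (hn : 0 < n) (j0 : Fin n)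
    (x : (i : Fin m) → PiLp (m : ℝ≥0∞) (fun _ : Fin n => 𝕂)) :
    ‖Tml 𝕂 m n kk j0 x‖ ≤ (n:ℝ) ^ (((kk:ℝ)+1)/(m:ℝ)) * ∏ l, ‖x l‖ := by
  haveI : Fact ((1:ℝ≥0∞) ≤ (m : ℝ≥0∞)) := ⟨by exact_mod_cast (by omega : 1 ≤ m)⟩
  by_cases hz : ∀ l, x l ≠ 0
  · set y : (i : Fin m) → PiLp (m : ℝ≥0∞) (fun _ : Fin n => 𝕂) :=
      fun l => (((‖x l‖)⁻¹ : ℝ) : 𝕂) • x l with hydef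
    have hxy : ∀ l, x l = ((‖x l‖ : ℝ) : 𝕂) • y l := by
      intro l
      rw [hydef, smul_smul, ← RCLike.ofReal_mul,
        mul_inv_cancel₀ (norm_ne_zero_iff.2 (hz l)), RCLike.ofReal_one, one_smul]
    have hy : ∀ l, ‖y l‖ = 1 := by
      intro l
      rw [hydef, norm_smul, RCLike.norm_ofReal, abs_of_nonneg (inv_nonneg.2 (norm_nonneg _)),
        inv_mul_cancel₀ (norm_ne_zero_iff.2 (hz l))]
    have h1 : Tml 𝕂 m n kk j0 x = (∏ l : Fin m, ((‖x l‖ : ℝ) : 𝕂)) • Tml 𝕂 m n kk j0 y := by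
      conv_lhs => rw [show x = fun l => ((‖x l‖ : ℝ) : 𝕂) • y l from funext hxy]
      exact (Tml 𝕂 m n kk j0).map_smul_univ _ _
    rw [h1, norm_smul, norm_prod]
    simp_rw [RCLike.norm_ofReal, abs_of_nonneg (norm_nonneg _)]
    rw [mul_comm]
    apply mul_le_mul_of_nonneg_right (Tml_norm_le_unit hm hkk hn j0 y hy)
      (Finset.prod_nonneg fun l _ => norm_nonneg _)
  · push_neg at hz
    obtain ⟨l, hl⟩ := hz
    rw [(Tml 𝕂 m n kk j0).map_coord_zero l hl, norm_zero]
    positivity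

end bound

section basis
variable {𝕂 : Type*} [RCLike 𝕂] {m n : ℕ}

lemma Tml_basis (hm : 2 ≤ m) {kk : ℕ} (hkk : kk + 2 ≤ m) (hn : 0 < n) (j0 : Fin n)
    (js : Fin (m-1) → Fin n) (K : Fin (m-1)) (hK : (K:ℕ) = kk)
    (d : Fin m → Fin n)
    (hd0 : ∀ l : Fin m, (l:ℕ) = 0 → d l = j0)
    (hds : ∀ (l : Fin m), (l:ℕ) ≠ 0 → d l = js ⟨(l:ℕ)-1, by have := l.isLt; omega⟩) :
    Tml 𝕂 m n kk j0 (fun l => (WithLp.equiv (m:ℝ≥0∞) (Fin n → 𝕂)).symm (Pi.single (d l) 1))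
      = if (∀ t, t < K → js t = j0) ∧ (∀ t, K ≤ t → js t = js K) then 1 else 0 := by
  rw [Tml_apply]
  have heval : ∀ (i' : Fin n) (l : Fin m),
      (WithLp.equiv (m:ℝ≥0∞) (Fin n → 𝕂))
          ((WithLp.equiv (m:ℝ≥0∞) (Fin n → 𝕂)).symm (Pi.single (d l) 1)) (tcoord kk j0 i' l)
        = if tcoord kk j0 i' l = d l then (1:𝕂) else 0 := by
    intro i' l
    rw [Equiv.apply_symm_apply]
    exact Pi.single_apply _ _ _
  simp_rw [heval]
  have hprod : ∀ i' : Fin n, (∏ l : Fin m, if tcoord kk j0 i' l = d l then (1:𝕂) else 0)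
      = if (∀ l, tcoord kk j0 i' l = d l) then 1 else 0 := by
    intro i'
    by_cases h : ∀ l, tcoord kk j0 i' l = d l
    · rw [if_pos h]
      exact Finset.prod_eq_one fun l _ => if_pos (h l)
    · rw [if_neg h]
      push_neg at h
      obtain ⟨l, hl⟩ := h
      exact Finset.prod_eq_zero (Finset.mem_univ l) (if_neg hl)
  simp_rw [hprod]
  have hiff : ∀ i' : Fin n, (∀ l, tcoord kk j0 i' l = d l) ↔
      (((∀ t, t < K → js t = j0) ∧ (∀ t, K ≤ t → js t = js K)) ∧ i' = js K) := by
    intro i'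
    constructor
    · intro h
      have hKmk : K = (⟨kk, by omega⟩ : Fin (m-1)) := by
        apply Fin.ext; simpa using hK
      have hi' : i' = js K := by
        have h1 := h ⟨kk+1, by omega⟩
        rw [tcoord, if_neg (by simp), hds _ (by simp)] at h1
        exact h1.trans (congrArg js (Fin.ext (by simp [hK])))
      refine ⟨⟨?_, ?_⟩, hi'⟩
      · intro t ht
        have h1 := h ⟨(t:ℕ)+1, by have := t.isLt; omega⟩
        have htk : (t:ℕ)+1 ≤ kk := by
          have : (t:ℕ) < (K:ℕ) := ht
          omega
        rw [tcoord, if_pos (by simpa using htk), hds _ (by simp)] at h1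
        exact (h1.trans (congrArg js (Fin.ext (by simp)))).symm
      · intro t ht
        have h1 := h ⟨(t:ℕ)+1, by have := t.isLt; omega⟩
        have htk : ¬ ((t:ℕ)+1 ≤ kk) := by
          have : (K:ℕ) ≤ (t:ℕ) := ht
          omega
        rw [tcoord, if_neg (by simpa using htk), hds _ (by simp)] at h1
        exact ((h1.trans (congrArg js (Fin.ext (by simp)))).symm).trans hi' 
    · rintro ⟨⟨hA, hB⟩, hi'⟩ l
      rw [tcoord]
      by_cases h0 : (l:ℕ) = 0
      · rw [if_pos (by omega), hd0 l h0]
      · rw [hds l h0]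
        set t : Fin (m-1) := ⟨(l:ℕ)-1, by have := l.isLt; omega⟩ with htdef
        by_cases hle : (l:ℕ) ≤ kk
        · rw [if_pos hle]
          have htK : t < K := by
            rw [Fin.lt_iff_val_lt_val, hK]
            simp only [htdef]
            omega
          exact (hA t htK).symm
        · rw [if_neg hle]
          have htK : K ≤ t := by
            rw [Fin.le_iff_val_le_val, hK]
            simp only [htdef]
            omega
          rw [hB t htK, hi']
  have hsum : (∑ i' : Fin n, if (∀ l, tcoord kk j0 i' l = d l) then (1:𝕂) else 0)
      = ∑ i' : Fin n, if (((∀ t, t < K → js t = j0) ∧ (∀ t, K ≤ t → js t = js K)) ∧ i' = js K)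
          then (1:𝕂) else 0 :=
    Finset.sum_congr rfl (fun i' _ => if_congr (hiff i') rfl rfl)
  rw [hsum]
  by_cases hQ : (∀ t, t < K → js t = j0) ∧ (∀ t, K ≤ t → js t = js K)
  · rw [if_pos hQ]
    have hrw : ∀ i' : Fin n,
        (if (((∀ t, t < K → js t = j0) ∧ (∀ t, K ≤ t → js t = js K)) ∧ i' = js K)
          then (1:𝕂) else 0) = if i' = js K then 1 else 0 := by
      intro i'
      by_cases hi : i' = js K
      · rw [if_pos ⟨hQ, hi⟩, if_pos hi]
      · rw [if_neg (fun hc => hi hc.2), if_neg hi]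
    simp_rw [hrw]
    rw [Finset.sum_ite_eq' Finset.univ (js K) (fun _ => (1:𝕂))]
    simp
  · rw [if_neg hQ]
    apply Finset.sum_eq_zero
    intro i' _
    exact if_neg (fun hc => hQ hc.1)

end basis

/-- **Optimality: `s_k ≥ m/(k−1)` for `k = 2,…,m`.**
If for exponents `s_2, …, s_m ∈ (0,∞)` (here `s ⟨k-2,_⟩ = s_k`) there is `C > 0` with
`sup_{j_1} ( Σ_{j_2} ( ⋯ ( Σ_{j_m} |T(e_{j_1},…,e_{j_m})|^{s_m} )^{s_{m−1}/s_m} ⋯ )^{s_2/s_3} )^{1/s_2}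
≤ C‖T‖` for all `n` and all `m`-linear forms `T : ℓ_m^n × ⋯ × ℓ_m^n → 𝕂`, then
`s_k ≥ m/(k−1)` for every `k = 2,…,m` (for the index `i : Fin (m-1)`, `k = i + 2`, so the
bound reads `m/(i+1)`). -/
theorem exponents_lower_bound (𝕂 : Type*) [RCLike 𝕂] (m : ℕ) (hm : 2 ≤ m)
    (s : Fin (m - 1) → ℝ) (hs : ∀ i, 0 < s i) :
    haveI : Fact ((1 : ℝ≥0∞) ≤ (m : ℝ≥0∞)) := ⟨by exact_mod_cast (by omega : 1 ≤ m)⟩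
    (∃ C : ℝ, 0 < C ∧ ∀ n : ℕ, 0 < n →
        ∀ T : ContinuousMultilinearMap 𝕂
            (fun _ : Fin m => PiLp (m : ℝ≥0∞) (fun _ : Fin n => 𝕂)) 𝕂,
          ⨆ j1 : Fin n,
            mixedNorm n (m - 1) s
              (fun js => ‖T (fun i : Fin m =>
                (WithLp.equiv (m : ℝ≥0∞) (Fin n → 𝕂)).symm
                  (Pi.single (if (i : ℕ) = 0 then j1
                    else js ⟨(i : ℕ) - 1, by have := i.isLt; omega⟩) 1))‖)
            ≤ C * ‖T‖) →
      ∀ k : Fin (m - 1), (m : ℝ) / ((k : ℕ) + 1) ≤ s k := by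
  intro h k
  haveI hFact : Fact ((1 : ℝ≥0∞) ≤ (m : ℝ≥0∞)) := ⟨by exact_mod_cast (by omega : 1 ≤ m)⟩
  obtain ⟨C, hC0, hC⟩ := h
  set kk : ℕ := (k : ℕ) with hkk0
  have hkm : kk + 2 ≤ m := by have := k.isLt; omega
  have hm0 : (0:ℝ) < (m:ℝ) := by exact_mod_cast (by omega : 0 < m)
  have hk1 : (0:ℝ) < (kk:ℝ) + 1 := by positivity
  have key : ∀ n : ℕ, 0 < n → (n:ℝ) ^ (1 / s k) ≤ C * (n:ℝ) ^ (((kk:ℝ)+1)/(m:ℝ)) := by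
    intro n hn
    set j0 : Fin n := ⟨0, hn⟩ with hj0
    set B : ℝ := (n:ℝ) ^ (((kk:ℝ)+1)/(m:ℝ)) with hB
    have hB0 : (0:ℝ) ≤ B := Real.rpow_nonneg (by positivity) _
    set T : ContinuousMultilinearMap 𝕂
        (fun _ : Fin m => PiLp (m : ℝ≥0∞) (fun _ : Fin n => 𝕂)) 𝕂 :=
      (Tml 𝕂 m n kk j0).mkContinuous B (fun x => Tml_norm_le hm hkm hn j0 x) with hT
    have hTle : ‖T‖ ≤ B :=
      (Tml 𝕂 m n kk j0).mkContinuous_norm_le hB0 _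
    have hcoe : ⇑T = ⇑(Tml 𝕂 m n kk j0) := by
      rw [hT]
      exact MultilinearMap.coe_mkContinuous _ _ _
    have hmain := hC n hn T
    have hfun : (fun js : Fin (m-1) → Fin n => ‖T (fun i : Fin m =>
            (WithLp.equiv (m : ℝ≥0∞) (Fin n → 𝕂)).symm
              (Pi.single (if (i : ℕ) = 0 then j0
                else js ⟨(i : ℕ) - 1, by have := i.isLt; omega⟩) 1))‖)
        = (fun js => if (∀ t, t < k → js t = j0) ∧ (∀ t, k ≤ t → js t = js k)
            then (1:ℝ) else 0) := by
      funext js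
      have hb := Tml_basis (𝕂 := 𝕂) hm hkm hn j0 js k hkk0.symm
        (fun i : Fin m => if (i : ℕ) = 0 then j0
            else js ⟨(i : ℕ) - 1, by have := i.isLt; omega⟩)
        (fun l hl => by simp [hl]) (fun l hl => by simp [hl])
      have hXeq : T (fun i : Fin m =>
            (WithLp.equiv (m : ℝ≥0∞) (Fin n → 𝕂)).symm
              (Pi.single (if (i : ℕ) = 0 then j0
                else js ⟨(i : ℕ) - 1, by have := i.isLt; omega⟩) 1))
          = if (∀ t, t < k → js t = j0) ∧ (∀ t, k ≤ t → js t = js k) then (1:𝕂) else 0 := by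
        rw [hcoe]
        exact hb
      rw [hXeq]
      split_ifs <;> simp
    have hval := mixedNorm_ind n j0 (m-1) s hs k
    have hv2 : mixedNorm n (m - 1) s
        (fun js => ‖T (fun i : Fin m =>
            (WithLp.equiv (m : ℝ≥0∞) (Fin n → 𝕂)).symm
              (Pi.single (if (i : ℕ) = 0 then j0
                else js ⟨(i : ℕ) - 1, by have := i.isLt; omega⟩) 1))‖)
        = (n:ℝ) ^ (1 / s k) := by
      rw [hfun]
      exact hval
    refine le_trans ?_ (le_trans hmain (mul_le_mul_of_nonneg_left hTle hC0.le))
    refine le_trans (le_of_eq ?_) (le_ciSup ((Set.finite_range _).bddAbove) j0)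
    exact hv2.symm
  have hfin : 1 / s k ≤ ((kk:ℝ)+1)/(m:ℝ) := by
    by_contra hcon
    push_neg at hcon
    set δ : ℝ := 1 / s k - ((kk:ℝ)+1)/(m:ℝ) with hδdef
    have hδ : 0 < δ := by rw [hδdef]; linarith
    obtain ⟨N, hN⟩ := exists_nat_gt (max 1 (C ^ (1/δ)))
    have hN1 : (1:ℝ) < (N:ℝ) := lt_of_le_of_lt (le_max_left _ _) hN
    have hN0r : (0:ℝ) < (N:ℝ) := lt_trans zero_lt_one hN1
    have hN0 : 0 < N := by exact_mod_cast hN0r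
    have hkey := key N hN0
    have h1 : C < (N:ℝ) ^ δ := by
      have h2 : C ^ (1/δ) < (N:ℝ) := lt_of_le_of_lt (le_max_right _ _) hN
      have h3 : (C ^ (1/δ)) ^ δ < (N:ℝ) ^ δ :=
        Real.rpow_lt_rpow (Real.rpow_nonneg hC0.le _) h2 hδ
      rwa [← Real.rpow_mul hC0.le, one_div_mul_cancel hδ.ne', Real.rpow_one] at h3
    have hgt : C * (N:ℝ) ^ (((kk:ℝ)+1)/(m:ℝ)) < (N:ℝ) ^ (1 / s k) := by
      calc C * (N:ℝ) ^ (((kk:ℝ)+1)/(m:ℝ))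
          < (N:ℝ) ^ δ * (N:ℝ) ^ (((kk:ℝ)+1)/(m:ℝ)) :=
            mul_lt_mul_of_pos_right h1 (Real.rpow_pos_of_pos hN0r _)
        _ = (N:ℝ) ^ (1 / s k) := by
            rw [← Real.rpow_add hN0r]
            congr 1
            rw [hδdef]
            ring
    exact absurd hkey (not_le.2 hgt)
  rw [div_le_div_iff₀ (hs k) hm0, one_mul] at hfin
  rw [div_le_iff₀ hk1]
  linarith
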